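/- arXiv:1607.02534 — 4 statements merged into one kernel-verified Lean document; each statement's English description precedes it below -/
import Mathlib

section
/- Suppose u, v are Schwartz functions on ℝ. Then the quadratic term of the transmission coefficient expansion, T₂(z) = ∫∫_{x < y} e^{2iz(y-x)} u(y) conj(v(x)) dx dy, defined for Im z > 0, equals i ∫_ℝ (2z + ξ)^{-1} û(ξ) conj(v̂(ξ)) dξ, where û denotes the (unitary) Fourier transform. -/
/-!
Insert Fourier inversion `conj (v x) = (2π)^{-1/2} ∫ e^{-ixξ} conj (v̂ ξ) dξ` and exchange the
order of integration; the exchange is legitimate because `|e^{2iz(y-x)}| = e^{-2 Im z (y-x)}`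
makes the kernel integrable over `{x < y}` against `u(y)`. For fixed `ξ` the phase combines with
the kernel into `e^{c(x-y)} e^{-iyξ}` with `c = -i(2z+ξ)`, `Re c = 2 Im z > 0`, so the `x`-integral
over `(-∞, y)` equals `c⁻¹ = i (2z+ξ)⁻¹` and the `y`-integral is `√(2π) û(ξ)`.
-/

open MeasureTheory Complex

/-- The unitary Fourier transform `û(ξ) = (2π)^{-1/2} ∫ u(x) e^{-ixξ} dx`. -/
noncomputable def unitaryFT (u : ℝ → ℂ) (ξ : ℝ) : ℂ :=
  ((Real.sqrt (2 * Real.pi) : ℝ) : ℂ)⁻¹ *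
    ∫ x : ℝ, Complex.exp (-(Complex.I * (x : ℂ) * (ξ : ℂ))) * u x

open Set
open scoped Real FourierTransform ComplexConjugate

lemma ofReal_sqrt_two_pi_ne_zero : ((√(2 * π) : ℝ) : ℂ) ≠ 0 :=
  ofReal_ne_zero.2 (Real.sqrt_pos.2 (by positivity)).ne'

lemma unitaryFT_eq_fourier (f : ℝ → ℂ) (ξ : ℝ) :
    unitaryFT f ξ = ((√(2 * π) : ℝ) : ℂ)⁻¹ * 𝓕 f (ξ / (2 * π)) := by
  rw [unitaryFT, Real.fourier_real_eq_integral_exp_smul]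
  congr 2 with x
  rw [smul_eq_mul]
  congr 2
  push_cast
  field_simp

lemma integrable_unitaryFT {f : ℝ → ℂ} (hf : Integrable (𝓕 f)) : Integrable (unitaryFT f) := by
  rw [funext (unitaryFT_eq_fourier f)]
  exact (hf.comp_div (by positivity)).const_mul _

lemma Continuous.unitaryFT_inversion {f : ℝ → ℂ} (hf : Continuous f) (hfi : Integrable f)
    (hFf : Integrable (𝓕 f)) (x : ℝ) :
    ((√(2 * π) : ℝ) : ℂ)⁻¹ * ∫ ξ : ℝ, cexp (I * x * ξ) * unitaryFT f ξ = f x := by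
  have h2π : (0 : ℝ) < 2 * π := by positivity
  conv_rhs => rw [← hf.fourierInv_fourier_eq hfi hFf, Real.fourierInv_eq']
  simp_rw [unitaryFT_eq_fourier, mul_left_comm _ ((√(2 * π) : ℝ) : ℂ)⁻¹, integral_const_mul]
  rw [← mul_assoc, ← mul_inv, ← ofReal_mul, Real.mul_self_sqrt h2π.le]
  have hsub :=
    Measure.integral_comp_div (fun w : ℝ => cexp (↑(2 * π * (w * x)) * I) • 𝓕 f w) (2 * π)
  have hexp : ∀ ξ : ℝ, (↑(2 * π * (ξ / (2 * π) * x)) * I : ℂ) = I * x * ξ := fun ξ => by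
    push_cast
    field_simp
  simp only [hexp, smul_eq_mul, abs_of_pos h2π, Real.inner_apply] at hsub ⊢
  rw [hsub, real_smul, inv_mul_cancel_left₀ (ofReal_ne_zero.2 h2π.ne')]

lemma Continuous.conj_unitaryFT_inversion {f : ℝ → ℂ} (hf : Continuous f)
    (hfi : Integrable f) (hFf : Integrable (𝓕 f)) (x : ℝ) :
    conj (f x) = ((√(2 * π) : ℝ) : ℂ)⁻¹ *
      ∫ ξ : ℝ, cexp (-(I * x * ξ)) * conj (unitaryFT f ξ) := by
  rw [← hf.unitaryFT_inversion hfi hFf x, map_mul, map_inv₀, conj_ofReal,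
    ← integral_conj]
  simp only [map_mul, ← exp_conj, conj_I, conj_ofReal, neg_mul]

theorem integral_mul_conj_eq_integral_unitaryFT {α : Type*} [MeasurableSpace α]
    {μ : Measure α} [SFinite μ] {E : α → ℂ} (hE : Integrable E μ) {a : α → ℝ}
    (ha : Measurable a) {f : ℝ → ℂ} (hf : Continuous f) (hfi : Integrable f)
    (hFf : Integrable (𝓕 f)) :
    ∫ p, E p * conj (f (a p)) ∂μ = ((√(2 * π) : ℝ) : ℂ)⁻¹ *
      ∫ ξ : ℝ, (∫ p, E p * cexp (-(I * a p * ξ)) ∂μ) * conj (unitaryFT f ξ) := by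
  have hint : Integrable (Function.uncurry fun p (ξ : ℝ) =>
      E p * (cexp (-(I * a p * ξ)) * conj (unitaryFT f ξ))) (μ.prod volume) := by
    have hû := integrable_unitaryFT hFf
    refine (hE.norm.mul_prod hû.norm).mono' ?_ (.of_forall fun q => ?_)
    · refine hE.aestronglyMeasurable.comp_fst.mul (.mul ?_ ?_)
      · exact (by fun_prop : Measurable fun q : α × ℝ => cexp (-(I * a q.1 * q.2)))
          |>.aestronglyMeasurable
      · exact continuous_conj.comp_aestronglyMeasurable hû.aestronglyMeasurable.comp_snd
    · simp [Function.uncurry, norm_exp]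
  simp_rw [hf.conj_unitaryFT_inversion hfi hFf, mul_left_comm (E _),
    integral_const_mul]
  congr 1
  simp_rw [← integral_const_mul (E _), integral_integral_swap hint, ← mul_assoc,
    integral_mul_const]

section LowerTriangle

variable {E : Type*} [NormedAddCommGroup E]

lemma measurableSet_lt_fst_snd : MeasurableSet {p : ℝ × ℝ | p.1 < p.2} :=
  measurableSet_lt measurable_fst measurable_snd

lemma indicator_lt_fst_snd_apply (f : ℝ × ℝ → E) (x y : ℝ) :
    {p : ℝ × ℝ | p.1 < p.2}.indicator f (x, y) = (Iio y).indicator (fun x => f (x, y)) x := by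
  by_cases h : x < y <;> simp [h]

lemma integrableOn_lt_fst_snd_of_Iio {f : ℝ × ℝ → E}
    (hf : AEStronglyMeasurable f (volume.restrict {p : ℝ × ℝ | p.1 < p.2}))
    (hsec : ∀ y, IntegrableOn (fun x => f (x, y)) (Iio y))
    (hnorm : Integrable fun y => ∫ x in Iio y, ‖f (x, y)‖) :
    IntegrableOn f {p : ℝ × ℝ | p.1 < p.2} := by
  rw [← integrable_indicator_iff measurableSet_lt_fst_snd, Measure.volume_eq_prod,
    integrable_prod_iff']
  · refine ⟨.of_forall fun y => ?_, ?_⟩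
    · simpa only [indicator_lt_fst_snd_apply, integrable_indicator_iff measurableSet_Iio]
        using hsec y
    · simpa only [indicator_lt_fst_snd_apply, norm_indicator_eq_indicator_norm,
        integral_indicator measurableSet_Iio] using hnorm
  · rw [← Measure.volume_eq_prod]
    exact (aestronglyMeasurable_indicator_iff measurableSet_lt_fst_snd).2 hf

lemma setIntegral_lt_fst_snd_eq_integral_Iio [NormedSpace ℝ E] {f : ℝ × ℝ → E}
    (hf : IntegrableOn f {p : ℝ × ℝ | p.1 < p.2}) :
    ∫ p in {p : ℝ × ℝ | p.1 < p.2}, f p = ∫ y, ∫ x in Iio y, f (x, y) := by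
  rw [← integral_indicator measurableSet_lt_fst_snd, Measure.volume_eq_prod,
    integral_prod_symm]
  · simp only [indicator_lt_fst_snd_apply, integral_indicator measurableSet_Iio]
  · rw [← Measure.volume_eq_prod]
    exact (integrable_indicator_iff measurableSet_lt_fst_snd).2 hf

end LowerTriangle

lemma integrableOn_exp_mul_sub_Iio {c : ℂ} (hc : 0 < c.re) (y : ℝ) :
    IntegrableOn (fun x : ℝ => cexp (c * (x - y))) (Iio y) := by
  simp_rw [mul_sub, exp_sub]
  exact ((integrableOn_exp_mul_complex_Iic hc y).mono_set Iio_subset_Iic_self).div_const _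

lemma integral_exp_mul_sub_Iio {c : ℂ} (hc : 0 < c.re) (y : ℝ) :
    ∫ x in Iio y, cexp (c * (x - y)) = c⁻¹ := by
  have hc0 : c ≠ 0 := fun h => by simp [h] at hc
  simp_rw [mul_sub, exp_sub, integral_div, ← integral_Iic_eq_integral_Iio,
    integral_exp_mul_complex_Iic hc, div_div_cancel_left' (exp_ne_zero _)]

lemma Real.integral_exp_mul_sub_Iio {a : ℝ} (ha : 0 < a) (y : ℝ) :
    ∫ x in Iio y, Real.exp (a * (x - y)) = a⁻¹ := by
  simp_rw [mul_sub, Real.exp_sub, integral_div, ← integral_Iic_eq_integral_Iio,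
    integral_exp_mul_Iic ha, div_div_cancel_left' (Real.exp_pos _).ne']

lemma integrableOn_lt_exp_mul_sub {c : ℂ} (hc : 0 < c.re) {g : ℝ → ℂ} (hg : Integrable g) :
    IntegrableOn (fun p : ℝ × ℝ => cexp (c * (p.1 - p.2)) * g p.2)
      {p : ℝ × ℝ | p.1 < p.2} := by
  have hkernel : Continuous fun p : ℝ × ℝ => cexp (c * (p.1 - p.2)) := by fun_prop
  refine integrableOn_lt_fst_snd_of_Iio
    (hkernel.aestronglyMeasurable.mul hg.aestronglyMeasurable.comp_snd).restrict
    (fun y => (integrableOn_exp_mul_sub_Iio hc y).mul_const (g y)) ?_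
  simp_rw [norm_mul, norm_exp, ← ofReal_sub, re_mul_ofReal, integral_mul_const,
    Real.integral_exp_mul_sub_Iio hc]
  exact hg.norm.const_mul _

lemma setIntegral_lt_exp_mul_sub {c : ℂ} (hc : 0 < c.re) {g : ℝ → ℂ} (hg : Integrable g) :
    ∫ p in {p : ℝ × ℝ | p.1 < p.2}, cexp (c * (p.1 - p.2)) * g p.2 = c⁻¹ * ∫ y, g y := by
  simp_rw [setIntegral_lt_fst_snd_eq_integral_Iio (integrableOn_lt_exp_mul_sub hc hg),
    integral_mul_const, integral_exp_mul_sub_Iio hc, integral_const_mul]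

lemma setIntegral_lt_exp_mul_mul_exp_eq_unitaryFT {z : ℂ} (hz : 0 < z.im) {g : ℝ → ℂ}
    (hg : Integrable g) (ξ : ℝ) :
    ∫ p in {p : ℝ × ℝ | p.1 < p.2},
        cexp (2 * I * z * (p.2 - p.1)) * g p.2 * cexp (-(I * p.1 * ξ))
      = ((√(2 * π) : ℝ) : ℂ) * I * ((2 * z + ξ)⁻¹ * unitaryFT g ξ) := by
  have hc : 0 < (-(I * (2 * z + ξ))).re := by simpa using hz
  have hgξ : Integrable fun y : ℝ => cexp (-(I * y * ξ)) * g y :=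
    hg.bdd_mul (c := 1) (by fun_prop) (.of_forall fun y => by simp [norm_exp])
  have hkernel : ∀ x y : ℝ, cexp (2 * I * z * (y - x)) * g y * cexp (-(I * x * ξ))
      = cexp (-(I * (2 * z + ξ)) * (x - y)) * (cexp (-(I * y * ξ)) * g y) := fun x y => by
    rw [mul_right_comm, ← exp_add, ← mul_assoc, ← exp_add]
    congr 2
    ring
  simp_rw [hkernel, setIntegral_lt_exp_mul_sub hc hgξ, unitaryFT]
  rw [inv_neg, mul_inv, inv_I]
  field_simp [ofReal_sqrt_two_pi_ne_zero]

/-- For Schwartz functions `u, v` and `Im z > 0`, the quadratic term of the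
transmission coefficient expansion
`T₂(z) = ∫∫_{x<y} e^{2iz(y−x)} u(y) conj(v(x)) dx dy`
equals `i ∫ (2z+ξ)⁻¹ û(ξ) conj(v̂(ξ)) dξ`, with the unitary Fourier transform. -/
theorem stmt_1 (u v : SchwartzMap ℝ ℂ) (z : ℂ) (hz : 0 < z.im) :
    (∫ p in {p : ℝ × ℝ | p.1 < p.2},
        Complex.exp (2 * Complex.I * z * ((p.2 : ℂ) - (p.1 : ℂ))) * u p.2
          * (starRingEnd ℂ) (v p.1))
      = Complex.I *
          ∫ ξ : ℝ, (2 * z + (ξ : ℂ))⁻¹ * unitaryFT (⇑u) ξ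
            * (starRingEnd ℂ) (unitaryFT (⇑v) ξ) := by
  have hc : 0 < (-(2 * I * z)).re := by simpa using hz
  have hE : IntegrableOn (fun p : ℝ × ℝ => cexp (2 * I * z * (p.2 - p.1)) * u p.2)
      {p : ℝ × ℝ | p.1 < p.2} := by
    convert integrableOn_lt_exp_mul_sub hc u.integrable using 4
    ring
  have hFv : Integrable (𝓕 ⇑v) := by
    simpa [SchwartzMap.fourier_coe] using (𝓕 v).integrable
  rw [integral_mul_conj_eq_integral_unitaryFT hE measurable_fst v.continuous v.integrable hFv]
  simp_rw [setIntegral_lt_exp_mul_mul_exp_eq_unitaryFT hz u.integrable, mul_assoc,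
    integral_const_mul]
  exact inv_mul_cancel_left₀ ofReal_sqrt_two_pi_ne_zero _
end

section
/- For every s with −1/2 < s < 0 and every j ≥ 0 integer with j > s (in particular all j ≥ 0), one has (2 sin(πs)/π)(−1)^{j+1} ∫₁^∞ (t²−1)^s t^{−2j−1} dt = binom(s, j) = s(s−1)⋯(s−j+1)/j!, where for j = 0 the binomial coefficient is 1. -/
/-!
Substituting `u = t⁻²` turns the integral into half of the Beta integral
`B(j - s, s + 1) = Γ(j - s) Γ(s + 1) / j!`. Pulling `Γ(-s)` out of `Γ(j - s)` produces
`(-1)^j s(s - 1)⋯(s - j + 1)`, and Euler's reflection formula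
`Γ(-s) Γ(1 + s) = -π / sin(πs)` cancels the prefactor.
-/

open MeasureTheory Set Real

theorem integral_Ioo_rpow_mul_one_sub_rpow {a b : ℝ} (ha : 0 < a) (hb : 0 < b) :
    ∫ x in Ioo (0 : ℝ) 1, x ^ (a - 1) * (1 - x) ^ (b - 1)
      = Gamma a * Gamma b / Gamma (a + b) := by
  have hbeta : Complex.betaIntegral a b
      = ((∫ x in (0 : ℝ)..1, x ^ (a - 1) * (1 - x) ^ (b - 1) : ℝ) : ℂ) := by
    rw [Complex.betaIntegral, ← intervalIntegral.integral_ofReal]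
    refine intervalIntegral.integral_congr fun x hx => ?_
    rw [uIcc_of_le zero_le_one] at hx
    push_cast
    rw [Complex.ofReal_cpow hx.1, Complex.ofReal_cpow (sub_nonneg.mpr hx.2)]
    push_cast
    ring
  have hGamma := Complex.betaIntegral_eq_Gamma_mul_div a b (by simpa) (by simpa)
  rw [hbeta, ← Complex.ofReal_add, Complex.Gamma_ofReal, Complex.Gamma_ofReal,
    Complex.Gamma_ofReal] at hGamma
  norm_cast at hGamma
  rw [← hGamma, intervalIntegral.integral_of_le zero_le_one, integral_Ioc_eq_integral_Ioo]

theorem image_inv_sq_Ioi_one : (fun t : ℝ => (t ^ 2)⁻¹) '' Ioi 1 = Ioo 0 1 := by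
  ext u
  constructor
  · rintro ⟨t, ht, rfl⟩
    have ht2 : 1 < t ^ 2 := one_lt_pow₀ ht two_ne_zero
    exact ⟨by positivity, inv_lt_one_of_one_lt₀ ht2⟩
  · rintro ⟨hu₀, hu₁⟩
    have hsqrt : √u < 1 := (sqrt_lt' one_pos).mpr (by simpa using hu₁)
    refine ⟨(√u)⁻¹, one_lt_inv₀ (sqrt_pos.mpr hu₀) |>.mpr hsqrt, ?_⟩
    simp [inv_pow, sq_sqrt hu₀.le]

theorem integral_Ioi_one_sq_sub_one_rpow_div_rpow (s c : ℝ) :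
    ∫ t in Ioi (1 : ℝ), (t ^ 2 - 1) ^ s / t ^ (2 * c + 1)
      = (∫ u in Ioo (0 : ℝ) 1, u ^ (c - s - 1) * (1 - u) ^ s) / 2 := by
  have hderiv : ∀ t ∈ Ioi (1 : ℝ),
      HasDerivWithinAt (fun t : ℝ => (t ^ 2)⁻¹) (-2 / t ^ 3) (Ioi 1) t := by
    intro t ht
    have ht₀ : t ≠ 0 := (zero_lt_one.trans ht).ne'
    refine (((hasDerivAt_pow 2 t).inv (pow_ne_zero 2 ht₀)).congr_deriv ?_).hasDerivWithinAt
    field_simp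
    ring
  have hinj : InjOn (fun t : ℝ => (t ^ 2)⁻¹) (Ioi 1) := by
    intro x hx y hy hxy
    exact (sq_eq_sq₀ (zero_lt_one.trans hx).le (zero_lt_one.trans hy).le).mp (inv_inj.mp hxy)
  rw [← image_inv_sq_Ioi_one,
    integral_image_eq_integral_abs_deriv_smul measurableSet_Ioi hderiv hinj,
    eq_div_iff two_ne_zero, ← integral_mul_const]
  refine setIntegral_congr_fun measurableSet_Ioi fun t (ht : 1 < t) => ?_
  have ht₀ : 0 < t := zero_lt_one.trans ht
  have hinv : (t ^ 2)⁻¹ = t ^ (-2 : ℝ) := by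
    rw [rpow_neg ht₀.le, rpow_two]
  have hderiv_abs : |-2 / t ^ 3| = 2 * t ^ (-3 : ℝ) := by
    rw [abs_div, abs_neg, abs_two, abs_of_pos (by positivity), rpow_neg ht₀.le, div_eq_mul_inv]
    norm_cast
  have hone_sub : 1 - (t ^ 2)⁻¹ = (t ^ 2 - 1) * t ^ (-2 : ℝ) := by
    rw [← hinv]; field_simp
  simp only [smul_eq_mul]
  rw [hderiv_abs, hone_sub, mul_rpow (by nlinarith) (by positivity), hinv, ← rpow_mul ht₀.le,
    ← rpow_mul ht₀.le, div_eq_mul_inv, ← rpow_neg ht₀.le]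
  have hexp : t ^ (-3 : ℝ) * t ^ (-2 * (c - s - 1)) * t ^ (-2 * s) = t ^ (-(2 * c + 1)) := by
    rw [← rpow_add ht₀, ← rpow_add ht₀]
    ring_nf
  linear_combination (-2 * (t ^ 2 - 1) ^ s) * hexp

theorem Gamma_add_nat_eq_prod_mul_Gamma {z : ℝ} (hz : 0 < z) (n : ℕ) :
    Gamma (z + n) = (∏ i ∈ Finset.range n, (z + i)) * Gamma z := by
  induction n with
  | zero => simp
  | succ n ih =>
    rw [Nat.cast_succ, ← add_assoc, Gamma_add_one (by positivity), ih, Finset.prod_range_succ]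
    ring

theorem sin_mul_Gamma_neg_mul_Gamma_add_one {s : ℝ} (hs : sin (π * s) ≠ 0) :
    sin (π * s) * (Gamma (-s) * Gamma (s + 1)) = -π := by
  have h := Gamma_mul_Gamma_one_sub (-s)
  rw [sub_neg_eq_add, add_comm, mul_neg, sin_neg, div_neg] at h
  rw [h]
  field_simp

/-- For `-1/2 < s < 0` and every natural number `j` (automatically `j > s`),
the contour-deformation identity
`(2 sin(πs)/π) (−1)^{j+1} ∫₁^∞ (t²−1)^s t^{−2j−1} dt = binom(s,j) = s(s−1)⋯(s−j+1)/j!`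
holds, where for `j = 0` the generalized binomial coefficient is `1`. -/
theorem stmt_4 (s : ℝ) (hs₁ : -(1 / 2 : ℝ) < s) (hs₂ : s < 0) (j : ℕ) :
    (2 * Real.sin (Real.pi * s) / Real.pi) * (-1 : ℝ) ^ (j + 1) *
        ∫ t in Set.Ioi (1 : ℝ), (t ^ 2 - 1) ^ s / t ^ (2 * j + 1)
      = (∏ i ∈ Finset.range j, (s - i)) / (Nat.factorial j) := by
  have hsin : sin (π * s) ≠ 0 :=
    (sin_neg_of_neg_of_neg_pi_lt (mul_neg_of_pos_of_neg pi_pos hs₂) (by nlinarith [pi_pos])).ne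
  have hbeta : ∫ u in Ioo (0 : ℝ) 1, u ^ ((j : ℝ) - s - 1) * (1 - u) ^ s
      = Gamma (j - s) * Gamma (s + 1) / j.factorial := by
    have h := integral_Ioo_rpow_mul_one_sub_rpow (a := j - s) (b := s + 1)
      (by linarith [j.cast_nonneg (α := ℝ)]) (by linarith)
    rwa [add_sub_cancel_right, show (j : ℝ) - s + (s + 1) = j + 1 by ring,
      Gamma_nat_eq_factorial] at h
  have hintegral : ∫ t in Ioi (1 : ℝ), (t ^ 2 - 1) ^ s / t ^ (2 * j + 1)
      = Gamma (j - s) * Gamma (s + 1) / (2 * j.factorial) := by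
    have h := integral_Ioi_one_sq_sub_one_rpow_div_rpow s j
    simp only [← rpow_natCast] at h ⊢
    push_cast at h ⊢
    rw [h, hbeta, div_div, mul_comm (j.factorial : ℝ)]
  have hGamma : Gamma (j - s) = (-1) ^ j * (∏ i ∈ Finset.range j, (s - i)) * Gamma (-s) := by
    have hneg : ∀ i : ℕ, -s + i = -(s - i) := fun i => by ring
    rw [sub_eq_neg_add, Gamma_add_nat_eq_prod_mul_Gamma (neg_pos.mpr hs₂)]
    simp only [hneg, Finset.prod_neg, Finset.card_range]
  have hsign : ((-1 : ℝ) ^ j) ^ 2 = 1 := by rw [← pow_mul, pow_mul', neg_one_sq, one_pow]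
  rw [hintegral, hGamma]
  calc _ = sin (π * s) * (Gamma (-s) * Gamma (s + 1)) * ((-1) ^ j) ^ 2 * (-1)
        * (∏ i ∈ Finset.range j, (s - i)) / (π * j.factorial) := by
        field_simp
        ring
    _ = _ := by
        rw [sin_mul_Gamma_neg_mul_Gamma_add_one hsin, hsign]
        field_simp
end

section
/- For 1 < p < ∞ and functions u, v ∈ U^p(T₀,T₁) (atomic p-variation spaces allowing atoms starting at the left endpoint), the restriction norms satisfy the superadditivity inequality ‖u‖^p_{Ũ^p(T₀,T₁)} ≤ ‖u‖^p_{Ũ^p(T₀,t)} + ‖u‖^p_{Ũ^p(t,T₁)} for every t ∈ (T₀,T₁). -/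
open Set

/-- A `U^p` atom on the interval `(a,b)`, allowing the first partition point to coincide
with the left endpoint (`Ũ^p` atoms): a right-continuous step function
`Σ_{j<N} φ_j χ_{[t_j, t_{j+1})}` with `a ≤ t₀ < ⋯ < t_N = b` and `Σ_j |φ_j|^p ≤ 1`. -/
def IsUpAtom (p a b : ℝ) (u : ℝ → ℂ) : Prop :=
  ∃ (N : ℕ) (t : ℕ → ℝ) (φ : ℕ → ℂ),
    StrictMono t ∧ a ≤ t 0 ∧ t N = b ∧
      (∑ j ∈ Finset.range N, ‖φ j‖ ^ p) ≤ 1 ∧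
      ∀ x ∈ Set.Ioo a b,
        u x = ∑ j ∈ Finset.range N, if t j ≤ x ∧ x < t (j + 1) then φ j else 0

/-- The set of `ℓ¹`-sums `Σ_j |c_j|` over atomic decompositions `u = Σ_j c_j a_j` of `u`
on `(a,b)`; the `Ũ^p(a,b)` norm is its infimum. -/
def upDecompSums (p a b : ℝ) (u : ℝ → ℂ) : Set ℝ :=
  { S | ∃ (c : ℕ → ℂ) (A : ℕ → ℝ → ℂ),
      (∀ j, IsUpAtom p a b (A j)) ∧ Summable (fun j => ‖c j‖) ∧
      (∀ x ∈ Set.Ioo a b, HasSum (fun j => c j * A j x) (u x)) ∧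
      S = ∑' j, ‖c j‖ }

/-- The `Ũ^p(a,b)` (atomic) norm. -/
noncomputable def UpNorm (p a b : ℝ) (u : ℝ → ℂ) : ℝ := sInf (upDecompSums p a b u)

/-!
Take decompositions `u = ∑ cᵢ Aᵢ` on `(T₀, t)` and `u = ∑ d_k B_k` on `(t, T₁)` with
`∑ ‖cᵢ‖ = L`, `∑ ‖d_k‖ = M`, extend the atoms by zero and let every `B_k` start at `t`.
Since `∑ ‖d_k‖ / M = ∑ ‖cᵢ‖ / L = 1`, on `(T₀, T₁)`
`u = ∑_{i,k} (‖d_k‖ / M • cᵢ Aᵢ + ‖cᵢ‖ / L • d_k B_k)`,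
and gluing the partitions of `Aᵢ` and `B_k` at `t` shows that each summand is
`‖cᵢ‖ ‖d_k‖ (L^p + M^p)^{1/p} / (L M)` times an atom. Summing these coefficients gives
`‖u‖ ≤ (L^p + M^p)^{1/p}`.

Neither decomposition says anything about `u t`; there `u` is recovered as a right limit, since a
decomposition on all of `(T₀, T₁)` writes `u` as a uniformly convergent series of right-continuous
step functions.
-/

open Filter Topology
open Complex (exp I norm_exp_ofReal_mul_I norm_mul_exp_arg_mul_I)

noncomputable def stepFn (N : ℕ) (t : ℕ → ℝ) (φ : ℕ → ℂ) (x : ℝ) : ℂ :=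
  ∑ j ∈ Finset.range N, if t j ≤ x ∧ x < t (j + 1) then φ j else 0

section StepFn

variable {N : ℕ} {t : ℕ → ℝ} {φ : ℕ → ℂ} {x : ℝ}

lemma stepFn_eq_of_mem (ht : Monotone t) {j : ℕ} (hj : j < N) (hx : t j ≤ x ∧ x < t (j + 1)) :
    stepFn N t φ x = φ j := by
  rw [stepFn, Finset.sum_eq_single_of_mem j (Finset.mem_range.2 hj), if_pos hx]
  intro i _ hij
  refine if_neg fun hi => ?_
  rcases Nat.lt_or_gt_of_ne hij with h | h
  · linarith [ht (Nat.succ_le_of_lt h), hi.2, hx.1]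
  · linarith [ht (Nat.succ_le_of_lt h), hi.1, hx.2]

lemma stepFn_eq_zero_of_forall (h : ∀ j < N, ¬(t j ≤ x ∧ x < t (j + 1))) :
    stepFn N t φ x = 0 :=
  Finset.sum_eq_zero fun j hj => if_neg (h j (Finset.mem_range.1 hj))

lemma stepFn_eq_zero_of_le (ht : Monotone t) (hx : t N ≤ x) : stepFn N t φ x = 0 :=
  stepFn_eq_zero_of_forall fun _ hj h => (h.2.trans_le (ht (Nat.succ_le_of_lt hj))).not_ge hx

lemma stepFn_eq_zero_of_lt (ht : Monotone t) (hx : x < t 0) : stepFn N t φ x = 0 :=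
  stepFn_eq_zero_of_forall fun j _ h => (hx.trans_le (ht j.zero_le)).not_ge h.1

lemma norm_stepFn_le_one {p : ℝ} (hp : 0 < p) (ht : Monotone t)
    (hφ : ∑ j ∈ Finset.range N, ‖φ j‖ ^ p ≤ 1) (x : ℝ) : ‖stepFn N t φ x‖ ≤ 1 := by
  by_cases h : ∃ j < N, t j ≤ x ∧ x < t (j + 1)
  · obtain ⟨j, hj, hx⟩ := h
    rw [stepFn_eq_of_mem ht hj hx]
    have hφj : ‖φ j‖ ^ p ≤ 1 :=
      (Finset.single_le_sum (fun i _ => by positivity) (Finset.mem_range.2 hj)).trans hφ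
    by_contra! h1
    exact hφj.not_gt (Real.one_lt_rpow h1 hp)
  · rw [stepFn_eq_zero_of_forall fun j hj hx => h ⟨j, hj, hx⟩, norm_zero]
    exact zero_le_one

lemma stepFn_const_mul (c : ℂ) : stepFn N t (fun j => c * φ j) x = c * stepFn N t φ x := by
  simp only [stepFn, Finset.mul_sum, mul_ite, mul_zero]

lemma eventually_le_iff_nhdsGE (c x : ℝ) : ∀ᶠ y in 𝓝[≥] x, (c ≤ y ↔ c ≤ x) := by
  rcases le_or_gt c x with h | h
  · filter_upwards [self_mem_nhdsWithin] with y hy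
    exact iff_of_true (h.trans hy) h
  · filter_upwards [nhdsWithin_le_nhds (Iio_mem_nhds h)] with y hy
    exact iff_of_false (not_le.2 hy) (not_le.2 h)

lemma stepFn_eventuallyEq_nhdsGE (N : ℕ) (t : ℕ → ℝ) (φ : ℕ → ℂ) (x : ℝ) :
    ∀ᶠ y in 𝓝[≥] x, stepFn N t φ y = stepFn N t φ x := by
  have h : ∀ᶠ y in 𝓝[≥] x, ∀ j ∈ Finset.range (N + 1), (t j ≤ y ↔ t j ≤ x) :=
    (Finset.eventually_all _).2 fun j _ => eventually_le_iff_nhdsGE (t j) x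
  filter_upwards [h] with y hy
  refine Finset.sum_congr rfl fun j hj => ?_
  have hj := Finset.mem_range.1 hj
  simp only [← not_le, hy j (Finset.mem_range.2 (by omega)),
    hy (j + 1) (Finset.mem_range.2 (by omega))]

end StepFn

def seqAppend {α : Type*} (N : ℕ) (f g : ℕ → α) (j : ℕ) : α :=
  if j < N then f j else g (j - N)

section SeqAppend

variable {α : Type*} {N : ℕ} {f g : ℕ → α}

lemma seqAppend_of_lt {j : ℕ} (hj : j < N) : seqAppend N f g j = f j := if_pos hj

lemma seqAppend_add (i : ℕ) : seqAppend N f g (N + i) = g i := by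
  simp [seqAppend]

lemma seqAppend_of_le (hfg : f N = g 0) {j : ℕ} (hj : j ≤ N) : seqAppend N f g j = f j := by
  rcases hj.lt_or_eq with hj | rfl
  · exact seqAppend_of_lt hj
  · simpa [hfg] using seqAppend_add (f := f) (g := g) 0

lemma sum_range_seqAppend {β : Type*} [AddCommMonoid β] (F : α → β) (M : ℕ) :
    ∑ j ∈ Finset.range (N + M), F (seqAppend N f g j)
      = ∑ j ∈ Finset.range N, F (f j) + ∑ j ∈ Finset.range M, F (g j) := by
  rw [Finset.sum_range_add]
  congr 1
  · exact Finset.sum_congr rfl fun j hj => by rw [seqAppend_of_lt (Finset.mem_range.1 hj)]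
  · simp only [seqAppend_add]

lemma strictMono_seqAppend [Preorder α] (hf : ∀ j < N, f j < f (j + 1)) (hfg : f N = g 0)
    (hg : StrictMono g) : StrictMono (seqAppend N f g) := by
  refine strictMono_nat_of_lt_succ fun j => ?_
  rcases lt_or_ge j N with hj | hj
  · rw [seqAppend_of_le hfg hj.le, seqAppend_of_le hfg hj]
    exact hf j hj
  · obtain ⟨i, rfl⟩ := Nat.exists_eq_add_of_le hj
    rw [add_assoc, seqAppend_add, seqAppend_add]
    exact hg i.lt_succ_self

end SeqAppend

lemma stepFn_seqAppend {N M : ℕ} {r s : ℕ → ℝ} {φ ψ : ℕ → ℂ} (hrs : r N = s 0) (x : ℝ) :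
    stepFn (N + M) (seqAppend N r s) (seqAppend N φ ψ) x = stepFn N r φ x + stepFn M s ψ x := by
  rw [stepFn, Finset.sum_range_add]
  congr 1
  · refine Finset.sum_congr rfl fun j hj => ?_
    have hj := Finset.mem_range.1 hj
    rw [seqAppend_of_le hrs hj.le, seqAppend_of_le hrs hj, seqAppend_of_lt hj]
  · refine Finset.sum_congr rfl fun i _ => ?_
    rw [add_assoc, seqAppend_add, seqAppend_add, seqAppend_add]

lemma isUpAtom_zero {p a b : ℝ} (hab : a ≤ b) : IsUpAtom p a b 0 :=
  ⟨0, fun n => b + n, 0, fun m n h => by simpa using h, by simpa using hab, by simp, by simp,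
    fun x _ => by simp⟩

lemma isUpAtom_add_stepFn {p a b : ℝ} {N M : ℕ} {r s : ℕ → ℝ} {φ ψ : ℕ → ℂ}
    (hr : StrictMono r) (ha : a ≤ r 0) (hrs : r N = s 0) (hs : StrictMono s) (hb : s M = b)
    (hφ : ∑ j ∈ Finset.range N, ‖φ j‖ ^ p ≤ 1) (hψ : ∑ j ∈ Finset.range M, ‖ψ j‖ ^ p ≤ 1)
    {α β : ℂ} (hαβ : ‖α‖ ^ p + ‖β‖ ^ p ≤ 1) :
    IsUpAtom p a b fun x => α * stepFn N r φ x + β * stepFn M s ψ x := by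
  have hscale (c : ℂ) (f : ℕ → ℂ) (n : ℕ) :
      ∑ j ∈ Finset.range n, ‖c * f j‖ ^ p = ‖c‖ ^ p * ∑ j ∈ Finset.range n, ‖f j‖ ^ p := by
    simp only [norm_mul, Real.mul_rpow (norm_nonneg _) (norm_nonneg _), Finset.mul_sum]
  refine ⟨N + M, seqAppend N r s, seqAppend N (α * φ ·) (β * ψ ·),
    strictMono_seqAppend (fun j _ => hr j.lt_succ_self) hrs hs, ?_, ?_, ?_, fun x _ => ?_⟩
  · rwa [seqAppend_of_le hrs N.zero_le]
  · rwa [seqAppend_add]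
  · rw [sum_range_seqAppend (‖·‖ ^ p), hscale, hscale]
    calc _ ≤ ‖α‖ ^ p * 1 + ‖β‖ ^ p * 1 := by gcongr
      _ ≤ 1 := by simpa using hαβ
  · show _ = stepFn (N + M) _ _ x
    rw [stepFn_seqAppend hrs, stepFn_const_mul, stepFn_const_mul]

lemma IsUpAtom.exists_anchored {p a b : ℝ} {u : ℝ → ℂ} (hp : 0 < p) (h : IsUpAtom p a b u) :
    ∃ (N : ℕ) (t : ℕ → ℝ) (φ : ℕ → ℂ), StrictMono t ∧ t 0 = a ∧ t N = b ∧
      ∑ j ∈ Finset.range N, ‖φ j‖ ^ p ≤ 1 ∧ ∀ x ∈ Ioo a b, u x = stepFn N t φ x := by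
  obtain ⟨N, t, φ, ht, ha, hb, hφ, hu⟩ := h
  rcases ha.eq_or_lt with ha | ha
  · exact ⟨N, t, φ, ht, ha.symm, hb, hφ, hu⟩
  let r : ℕ → ℝ := fun j => if j = 0 then a else t 0
  refine ⟨1 + N, seqAppend 1 r t, seqAppend 1 0 φ,
    strictMono_seqAppend (by simpa [r] using ha) rfl ht, rfl, by rwa [seqAppend_add], ?_,
    fun x hx => ?_⟩
  · rw [sum_range_seqAppend (‖·‖ ^ p)]
    simpa [Real.zero_rpow hp.ne'] using hφ
  · rw [hu x hx]
    show _ = stepFn (1 + N) _ _ x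
    rw [stepFn_seqAppend (N := 1) (r := r) rfl]
    simp [stepFn]

lemma summable_norm_mul_of_norm_le_one {ι : Type*} {c f : ι → ℂ} (hc : Summable (‖c ·‖))
    (hf : ∀ i, ‖f i‖ ≤ 1) : Summable fun i => ‖c i * f i‖ :=
  hc.of_nonneg_of_le (fun _ => norm_nonneg _) fun i => by
    rw [norm_mul]; exact mul_le_of_le_one_right (norm_nonneg _) (hf i)

section StepSeries

variable {p : ℝ} {c : ℕ → ℂ} {N : ℕ → ℕ} {t : ℕ → ℕ → ℝ} {φ : ℕ → ℕ → ℂ}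

lemma continuousWithinAt_tsum_mul_stepFn (hp : 0 < p) (hc : Summable (‖c ·‖))
    (ht : ∀ j, Monotone (t j)) (hφ : ∀ j, ∑ i ∈ Finset.range (N j), ‖φ j i‖ ^ p ≤ 1) (x : ℝ) :
    ContinuousWithinAt (fun y => ∑' j, c j * stepFn (N j) (t j) (φ j) y) (Ici x) x :=
  tendsto_tsum_of_dominated_convergence hc
    (fun j => tendsto_const_nhds.congr'
      ((stepFn_eventuallyEq_nhdsGE (N j) (t j) (φ j) x).mono fun y hy => by simp only [hy]))
    (Eventually.of_forall fun y j => by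
      rw [norm_mul]
      exact mul_le_of_le_one_right (norm_nonneg _) (norm_stepFn_le_one hp (ht j) (hφ j) y))

lemma hasSum_mul_stepFn_Ico {b x : ℝ} {u : ℝ → ℂ} (hp : 0 < p) (hxb : x < b)
    (hu : ContinuousWithinAt u (Ici x) x) (hc : Summable (‖c ·‖))
    (ht : ∀ j, Monotone (t j)) (hφ : ∀ j, ∑ i ∈ Finset.range (N j), ‖φ j i‖ ^ p ≤ 1)
    (hrep : ∀ y ∈ Ioo x b, HasSum (fun j => c j * stepFn (N j) (t j) (φ j) y) (u y)) :
    ∀ y ∈ Ico x b, HasSum (fun j => c j * stepFn (N j) (t j) (φ j) y) (u y) := by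
  intro y hy
  rcases hy.1.eq_or_lt with rfl | hxy
  · have hv := (continuousWithinAt_tsum_mul_stepFn hp hc ht hφ x).mono Ioi_subset_Ici_self
    have hvu : (fun z => ∑' j, c j * stepFn (N j) (t j) (φ j) z) =ᶠ[𝓝[>] x] u := by
      filter_upwards [Ioo_mem_nhdsGT hxb] with z hz using (hrep z hz).tsum_eq
    refine ((summable_norm_mul_of_norm_le_one hc fun j =>
      norm_stepFn_le_one hp (ht j) (hφ j) x).of_norm.hasSum_iff).2 ?_
    exact tendsto_nhds_unique (hv.tendsto.congr' hvu) (hu.mono Ioi_subset_Ici_self).tendsto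
  · exact hrep y ⟨hxy, hy.2⟩

end StepSeries

lemma continuousWithinAt_Ici_of_upDecompSums_nonempty {p a b x : ℝ} {u : ℝ → ℂ} (hp : 0 < p)
    (h : (upDecompSums p a b u).Nonempty) (hx : x ∈ Ioo a b) :
    ContinuousWithinAt u (Ici x) x := by
  obtain ⟨-, c, A, hA, hc, hu, -⟩ := h
  choose N t φ ht _ _ hφ hA using hA
  have heq : ∀ y ∈ Ioo a b, u y = ∑' j, c j * stepFn (N j) (t j) (φ j) y := fun y hy =>
    ((hu y hy).congr_fun fun j => by rw [hA j y hy]; rfl).tsum_eq.symm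
  refine (continuousWithinAt_tsum_mul_stepFn hp hc (fun j => (ht j).monotone) hφ x
    ).congr_of_eventuallyEq ?_ (heq x hx)
  filter_upwards [nhdsWithin_le_nhds (Ioo_mem_nhds hx.1 hx.2)] with y hy using heq y hy

lemma mem_upDecompSums_of_hasSum {ι : Type*} (e : ℕ ≃ ι) {p a b S : ℝ} {u : ℝ → ℂ}
    {c : ι → ℂ} {A : ι → ℝ → ℂ} (hA : ∀ i, IsUpAtom p a b (A i)) (hc : HasSum (‖c ·‖) S)
    (hu : ∀ x ∈ Ioo a b, HasSum (fun i => c i * A i x) (u x)) : S ∈ upDecompSums p a b u :=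
  ⟨c ∘ e, A ∘ e, fun n => hA (e n), (e.hasSum_iff.2 hc).summable,
    fun x hx => e.hasSum_iff.2 (hu x hx), (e.hasSum_iff.2 hc).tsum_eq.symm⟩

lemma mem_upDecompSums_of_le {p a b L L' : ℝ} {u : ℝ → ℂ} (hab : a ≤ b)
    (hL : L ∈ upDecompSums p a b u) (hLL' : L ≤ L') : L' ∈ upDecompSums p a b u := by
  obtain ⟨c, A, hA, hc, hu, rfl⟩ := hL
  -- an extra zero atom in front carries the surplus `L' - L`
  let c' : ℕ → ℂ := fun n => Nat.casesOn n ((L' - ∑' j, ‖c j‖ : ℝ) : ℂ) c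
  let A' : ℕ → ℝ → ℂ := fun n => Nat.casesOn n 0 A
  refine mem_upDecompSums_of_hasSum (Equiv.refl ℕ) (c := c') (A := A')
    (fun n => n.casesOn (isUpAtom_zero hab) hA) ?_ fun x hx => ?_
  · have h := HasSum.zero_add (f := fun n => ‖c' n‖) hc.hasSum
    rwa [show ‖c' 0‖ = L' - ∑' j, ‖c j‖ from Complex.norm_of_nonneg (sub_nonneg.2 hLL'),
      sub_add_cancel] at h
  · have h := HasSum.zero_add (f := fun n => c' n * A' n x) (hu x hx)
    rwa [show c' 0 * A' 0 x = 0 from mul_zero _, zero_add] at h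

lemma mem_upDecompSums_nonneg {p a b L : ℝ} {u : ℝ → ℂ} (h : L ∈ upDecompSums p a b u) :
    0 ≤ L := by
  obtain ⟨c, A, -, -, -, rfl⟩ := h
  exact tsum_nonneg fun j => norm_nonneg _

lemma upNorm_nonneg (p a b : ℝ) (u : ℝ → ℂ) : 0 ≤ UpNorm p a b u :=
  Real.sInf_nonneg fun _ => mem_upDecompSums_nonneg

lemma upNorm_le {p a b L : ℝ} {u : ℝ → ℂ} (h : L ∈ upDecompSums p a b u) : UpNorm p a b u ≤ L :=
  csInf_le ⟨0, fun _ => mem_upDecompSums_nonneg⟩ h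

lemma upNorm_add_mem_upDecompSums {p a b ε : ℝ} {u : ℝ → ℂ} (hab : a ≤ b)
    (h : (upDecompSums p a b u).Nonempty) (hε : 0 < ε) :
    UpNorm p a b u + ε ∈ upDecompSums p a b u := by
  obtain ⟨L, hL, hlt⟩ := exists_lt_of_csInf_lt h (lt_add_of_pos_right _ hε)
  exact mem_upDecompSums_of_le hab hL hlt.le

lemma hasSum_prod_weighted {ι κ : Type*} {f : ι → ℂ} {g : κ → ℂ} (hf : Summable (‖f ·‖))
    (hg : Summable (‖g ·‖)) {a : ι → ℝ} {b : κ → ℝ} (ha : HasSum a 1) (hb : HasSum b 1)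
    (ha0 : ∀ i, 0 ≤ a i) (hb0 : ∀ k, 0 ≤ b k) :
    HasSum (fun ik : ι × κ => (b ik.2 : ℂ) * f ik.1 + (a ik.1 : ℂ) * g ik.2)
      (∑' i, f i + ∑' k, g k) := by
  have haℂ : HasSum (fun i => (a i : ℂ)) 1 := Complex.ofReal_one ▸ Complex.hasSum_ofReal.2 ha
  have hbℂ : HasSum (fun k => (b k : ℂ)) 1 := Complex.ofReal_one ▸ Complex.hasSum_ofReal.2 hb
  have ha_norm : Summable fun i => ‖(a i : ℂ)‖ :=
    ha.summable.congr fun i => (Complex.norm_of_nonneg (ha0 i)).symm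
  have hb_norm : Summable fun k => ‖(b k : ℂ)‖ :=
    hb.summable.congr fun k => (Complex.norm_of_nonneg (hb0 k)).symm
  have h1 := HasSum.mul (g := fun k => (b k : ℂ)) hf.of_norm.hasSum hbℂ
    (summable_mul_of_summable_norm (g := fun k => (b k : ℂ)) hf hb_norm)
  have h2 := HasSum.mul (f := fun i => (a i : ℂ)) haℂ hg.of_norm.hasSum
    (summable_mul_of_summable_norm (f := fun i => (a i : ℂ)) ha_norm hg)
  have h := h1.add h2
  rw [mul_one, one_mul] at h
  exact h.congr_fun fun ik => by ring

lemma div_rpow_add_div_rpow_eq_one {p L M : ℝ} (hp : p ≠ 0) (hL : 0 ≤ L) (hM : 0 ≤ M)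
    (h : 0 < L ^ p + M ^ p) :
    (L / (L ^ p + M ^ p) ^ p⁻¹) ^ p + (M / (L ^ p + M ^ p) ^ p⁻¹) ^ p = 1 := by
  have hK : 0 ≤ (L ^ p + M ^ p) ^ p⁻¹ := by positivity
  rw [Real.div_rpow hL hK, Real.div_rpow hM hK, Real.rpow_inv_rpow h.le hp, ← add_div,
    div_self h.ne']

lemma eq_tsum_add_tsum_of_split {a t b x : ℝ} {u : ℝ → ℂ} {c d : ℕ → ℂ} {F G : ℕ → ℝ → ℂ}
    (hF : ∀ i y, t ≤ y → F i y = 0) (hG : ∀ k y, y < t → G k y = 0)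
    (hl : ∀ y ∈ Ioo a t, HasSum (fun i => c i * F i y) (u y))
    (hr : ∀ y ∈ Ico t b, HasSum (fun k => d k * G k y) (u y)) (hx : x ∈ Ioo a b) :
    u x = ∑' i, c i * F i x + ∑' k, d k * G k x := by
  rcases lt_or_ge x t with hxt | hxt
  · simp only [hG _ x hxt, mul_zero, tsum_zero, add_zero]
    exact (hl x ⟨hx.1, hxt⟩).tsum_eq.symm
  · simp only [hF _ x hxt, mul_zero, tsum_zero, zero_add]
    exact (hr x ⟨hxt, hx.2⟩).tsum_eq.symm

lemma ofReal_mul_exp_arg_add_eq {L M K : ℝ} (hL : L ≠ 0) (hM : M ≠ 0) (hK : K ≠ 0)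
    (z w F G : ℂ) :
    ((‖z‖ * ‖w‖ * (K / (L * M)) : ℝ) : ℂ) *
        ((L / K : ℝ) * exp (z.arg * I) * F + (M / K : ℝ) * exp (w.arg * I) * G)
      = (‖w‖ / M : ℝ) * (z * F) + (‖z‖ / L : ℝ) * (w * G) := by
  have hz : (‖z‖ : ℂ) * exp (z.arg * I) = z := norm_mul_exp_arg_mul_I z
  have hw : (‖w‖ : ℂ) * exp (w.arg * I) = w := norm_mul_exp_arg_mul_I w
  have hL' : ((‖z‖ * ‖w‖ * (K / (L * M)) : ℝ) : ℂ) * (L / K : ℝ) = (‖w‖ / M : ℝ) * ‖z‖ := by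
    norm_cast; field_simp
  have hM' : ((‖z‖ * ‖w‖ * (K / (L * M)) : ℝ) : ℂ) * (M / K : ℝ) = (‖z‖ / L : ℝ) * ‖w‖ := by
    norm_cast; field_simp
  linear_combination (exp (z.arg * I) * F) * hL' + (exp (w.arg * I) * G) * hM'
    + ((‖w‖ / M : ℝ) * F : ℂ) * hz + ((‖z‖ / L : ℝ) * G : ℂ) * hw

lemma rpow_add_rpow_inv_mem_upDecompSums {p T₀ t T₁ L M : ℝ} {u : ℝ → ℂ} (hp : 0 < p)
    (ht : t < T₁) (hu : ContinuousWithinAt u (Ici t) t) (hL : L ∈ upDecompSums p T₀ t u)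
    (hM : M ∈ upDecompSums p t T₁ u) (hL0 : 0 < L) (hM0 : 0 < M) :
    (L ^ p + M ^ p) ^ p⁻¹ ∈ upDecompSums p T₀ T₁ u := by
  obtain ⟨c, A, hA, hc, hcu, hLc⟩ := hL
  obtain ⟨d, B, hB, hd, hdu, hMd⟩ := hM
  replace hLc : HasSum (‖c ·‖) L := hLc ▸ hc.hasSum
  replace hMd : HasSum (‖d ·‖) M := hMd ▸ hd.hasSum
  choose N r φ hr hr0 hrN hφ hAr using hA
  choose N' s ψ hs hs0 hsN' hψ hBs using fun k => (hB k).exists_anchored hp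
  set F : ℕ → ℝ → ℂ := fun i => stepFn (N i) (r i) (φ i)
  set G : ℕ → ℝ → ℂ := fun k => stepFn (N' k) (s k) (ψ k)
  set K := (L ^ p + M ^ p) ^ p⁻¹
  have hK0 : 0 < K := by positivity
  refine mem_upDecompSums_of_hasSum (Denumerable.eqv (ℕ × ℕ)).symm
    (c := fun ik => ((‖c ik.1‖ * ‖d ik.2‖ * (K / (L * M)) : ℝ) : ℂ))
    (A := fun ik x => (L / K : ℝ) * exp ((c ik.1).arg * I) * F ik.1 x
      + (M / K : ℝ) * exp ((d ik.2).arg * I) * G ik.2 x)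
    (fun ik => isUpAtom_add_stepFn (hr _) (hr0 _) ((hrN _).trans (hs0 _).symm) (hs _) (hsN' _)
      (hφ _) (hψ _) ?_) ?_ fun x hx => ?_
  · rw [norm_mul, norm_mul, norm_exp_ofReal_mul_I, norm_exp_ofReal_mul_I,
      Complex.norm_of_nonneg (by positivity), Complex.norm_of_nonneg (by positivity), mul_one,
      mul_one]
    exact (div_rpow_add_div_rpow_eq_one hp.ne' hL0.le hM0.le (by positivity)).le
  · have hcd := hLc.mul hMd (hc.mul_of_nonneg hd (fun _ => norm_nonneg _) fun _ => norm_nonneg _)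
    have hK : L * M * (K / (L * M)) = K := by field_simp
    exact (hK ▸ hcd.mul_right (K / (L * M))).congr_fun fun ik =>
      Complex.norm_of_nonneg (by positivity)
  · rw [eq_tsum_add_tsum_of_split (F := F) (G := G)
      (fun i y hy => stepFn_eq_zero_of_le (hr i).monotone ((hrN i).trans_le hy))
      (fun k y hy => stepFn_eq_zero_of_lt (hs k).monotone ((hs0 k).symm ▸ hy))
      (fun y hy => (hcu y hy).congr_fun fun i => by rw [hAr i y hy]; rfl)
      (hasSum_mul_stepFn_Ico hp ht hu hd (fun k => (hs k).monotone) hψ fun y hy =>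
        (hdu y hy).congr_fun fun k => by rw [hBs k y hy]) hx]
    have ha : HasSum (‖c ·‖ / L) 1 := div_self hL0.ne' ▸ hLc.div_const L
    have hb : HasSum (‖d ·‖ / M) 1 := div_self hM0.ne' ▸ hMd.div_const M
    convert hasSum_prod_weighted
      (summable_norm_mul_of_norm_le_one hc fun i => norm_stepFn_le_one hp (hr i).monotone (hφ i) x)
      (summable_norm_mul_of_norm_le_one hd fun k => norm_stepFn_le_one hp (hs k).monotone (hψ k) x)
      ha hb (fun _ => by positivity) (fun _ => by positivity) using 1
    funext ⟨i, k⟩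
    exact ofReal_mul_exp_arg_add_eq hL0.ne' hM0.ne' hK0.ne' _ _ _ _

/-- For `1 < p < ∞` and `u` in the atomic spaces on the subintervals and
on the whole interval, the restriction norms are `p`-superadditive:
`‖u‖^p_{Ũ^p(T₀,T₁)} ≤ ‖u‖^p_{Ũ^p(T₀,t)} + ‖u‖^p_{Ũ^p(t,T₁)}` for every `t ∈ (T₀,T₁)`. -/
theorem stmt_11 (p : ℝ) (hp : 1 < p) (T₀ T₁ t : ℝ) (h₀ : T₀ < t) (h₁ : t < T₁)
    (u : ℝ → ℂ)
    (hw : (upDecompSums p T₀ T₁ u).Nonempty)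
    (hl : (upDecompSums p T₀ t u).Nonempty) (hr : (upDecompSums p t T₁ u).Nonempty) :
    UpNorm p T₀ T₁ u ^ p ≤ UpNorm p T₀ t u ^ p + UpNorm p t T₁ u ^ p := by
  have hp0 : 0 < p := zero_lt_one.trans hp
  have hu := continuousWithinAt_Ici_of_upDecompSums_nonempty hp0 hw ⟨h₀, h₁⟩
  have hle : ∀ ε ∈ Ioi (0 : ℝ), UpNorm p T₀ T₁ u ^ p
      ≤ (UpNorm p T₀ t u + ε) ^ p + (UpNorm p t T₁ u + ε) ^ p := by
    intro ε hε
    have hNl := add_pos_of_nonneg_of_pos (upNorm_nonneg p T₀ t u) hε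
    have hNr := add_pos_of_nonneg_of_pos (upNorm_nonneg p t T₁ u) hε
    refine (Real.le_rpow_inv_iff_of_pos (upNorm_nonneg ..) (by positivity) hp0).1 (upNorm_le ?_)
    exact rpow_add_rpow_inv_mem_upDecompSums hp0 h₁ hu (upNorm_add_mem_upDecompSums h₀.le hl hε)
      (upNorm_add_mem_upDecompSums h₁.le hr hε) hNl hNr
  have hcont : Continuous fun ε : ℝ => (UpNorm p T₀ t u + ε) ^ p + (UpNorm p t T₁ u + ε) ^ p :=
    ((continuous_const_add _).rpow_const fun _ => Or.inr hp0.le).add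
      ((continuous_const_add _).rpow_const fun _ => Or.inr hp0.le)
  have hlim : Tendsto (fun ε : ℝ => (UpNorm p T₀ t u + ε) ^ p + (UpNorm p t T₁ u + ε) ^ p)
      (𝓝[>] 0) (𝓝 (UpNorm p T₀ t u ^ p + UpNorm p t T₁ u ^ p)) := by
    simpa using (hcont.tendsto 0).mono_left nhdsWithin_le_nhds
  exact ge_of_tendsto hlim (eventually_nhdsWithin_of_forall hle)
end

section
/- For 1 < p < ∞ and any v in the p-variation space V^p(ℝ) and any h > 0, the translated difference satisfies ‖v(·+h) − v‖_{L^p(ℝ)} ≤ C h^{1/p} ‖v‖_{V^p} for a universal constant C (one may take C = 4^{1/p}). -/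
/-!
Cut the line into the intervals `[nh, (n+1)h)`, `n ∈ ℤ`, and translate each onto `[0, h)`.
For fixed `y ∈ [0, h)` the points `y + nh` form an increasing sequence, so the increments
`|v(y + (n+1)h) - v(y + nh)|^p` sum to at most `‖v‖_{V^p}^p`; integrating over `[0, h)`
gives `‖v(· + h) - v‖_p^p ≤ h ‖v‖_{V^p}^p`, i.e. the bound even with `C = 1`.
-/

open MeasureTheory Set

/-- The set of `p`-variation sums of `v` on the whole line: for each finite increasing
tuple `t₀ < ⋯ < t_N` the quantity `(Σ_{j<N} |v(t_{j+1}) − v(t_j)|^p + |v(t_N)|^p)^{1/p}`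
(the last term implements the convention `v(+∞) = 0`). -/
def varSumsR (p : ℝ) (v : ℝ → ℂ) : Set ℝ :=
  { S | ∃ (N : ℕ) (t : ℕ → ℝ), StrictMono t ∧
      S = (∑ j ∈ Finset.range N, ‖v (t (j + 1)) - v (t j)‖ ^ p + ‖v (t N)‖ ^ p) ^ p⁻¹ }

/-- The `V^p(ℝ)` norm. -/
noncomputable def VpNormR (p : ℝ) (v : ℝ → ℂ) : ℝ := sSup (varSumsR p v)

open scoped ENNReal

theorem MeasureTheory.tsum_lintegral_le_lintegral_tsum {α ι : Type*} [MeasurableSpace α]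
    {μ : Measure α} (f : ι → α → ℝ≥0∞) :
    ∑' i, ∫⁻ a, f i a ∂μ ≤ ∫⁻ a, ∑' i, f i a ∂μ := by
  classical
  rw [ENNReal.tsum_eq_iSup_sum]
  refine iSup_le fun s => le_trans ?_ (lintegral_mono fun a => ENNReal.sum_le_tsum s)
  induction s using Finset.induction with
  | empty => simp
  | insert i s hi ih =>
    simp only [Finset.sum_insert hi]
    exact (add_le_add_right ih _).trans (le_lintegral_add _ _)

theorem MeasureTheory.lintegral_le_mul_of_tsum_zsmul_le {f : ℝ → ℝ≥0∞} {h : ℝ} (hh : 0 < h) {C : ℝ≥0∞}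
    (hf : ∀ y, ∑' n : ℤ, f (y + n • h) ≤ C) :
    ∫⁻ x, f x ≤ C * ENNReal.ofReal h := by
  have translate (n : ℤ) :
      ∫⁻ x in Ico (n • h) ((n + 1) • h), f x = ∫⁻ y in Ico 0 h, f (y + n • h) := by
    rw [(measurePreserving_add_right volume (n • h)).setLIntegral_comp_emb
      (measurableEmbedding_addRight _), image_add_const_Ico, zero_add, add_comm h,
      add_one_zsmul]
  calc ∫⁻ x, f x
      = ∑' n : ℤ, ∫⁻ x in Ico (n • h) ((n + 1) • h), f x := by
        rw [← setLIntegral_univ, ← iUnion_Ico_zsmul hh,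
          Measure.restrict_iUnion (pairwise_disjoint_Ico_zsmul h) fun _ => measurableSet_Ico,
          lintegral_sum_measure]
    _ = ∑' n : ℤ, ∫⁻ y in Ico 0 h, f (y + n • h) := tsum_congr translate
    _ ≤ ∫⁻ y in Ico 0 h, ∑' n : ℤ, f (y + n • h) := tsum_lintegral_le_lintegral_tsum _
    _ ≤ ∫⁻ _ in Ico 0 h, C := lintegral_mono hf
    _ = C * ENNReal.ofReal h := by rw [setLIntegral_const, Real.volume_Ico, sub_zero]

section Variation

variable {p : ℝ} {v : ℝ → ℂ}

theorem VpNormR_nonneg (hbd : BddAbove (varSumsR p v)) : 0 ≤ VpNormR p v :=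
  le_csSup_of_le hbd ⟨0, Nat.cast, Nat.strictMono_cast, rfl⟩ (by positivity)

theorem sum_norm_sub_rpow_le_VpNormR_rpow (hp : 0 < p) (hbd : BddAbove (varSumsR p v))
    {t : ℕ → ℝ} (ht : StrictMono t) (N : ℕ) :
    ∑ j ∈ Finset.range N, ‖v (t (j + 1)) - v (t j)‖ ^ p ≤ VpNormR p v ^ p := by
  set S := ∑ j ∈ Finset.range N, ‖v (t (j + 1)) - v (t j)‖ ^ p + ‖v (t N)‖ ^ p
  have hS : S ^ p⁻¹ ≤ VpNormR p v := le_csSup hbd ⟨N, t, ht, rfl⟩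
  rw [Real.rpow_inv_le_iff_of_pos (by positivity) (VpNormR_nonneg hbd) hp] at hS
  exact (le_add_of_nonneg_right (by positivity)).trans hS

theorem sum_int_norm_sub_rpow_le_VpNormR_rpow (hp : 0 < p) (hbd : BddAbove (varSumsR p v))
    {t : ℤ → ℝ} (ht : StrictMono t) (F : Finset ℤ) :
    ∑ n ∈ F, ‖v (t (n + 1)) - v (t n)‖ ^ p ≤ VpNormR p v ^ p := by
  obtain ⟨m, hm⟩ := F.bddBelow
  -- `j ↦ m + j` hits every point of `F`, as `m` is a lower bound of `F`.
  set ι : ℕ → ℤ := fun j => m + j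
  have hι : StrictMono ι := fun _ _ hjk => by simpa [ι] using hjk
  have hF : ∑ j ∈ F.preimage ι hι.injective.injOn, ‖v (t (ι j + 1)) - v (t (ι j))‖ ^ p
      = ∑ n ∈ F, ‖v (t (n + 1)) - v (t n)‖ ^ p :=
    Finset.sum_preimage ι F _ (fun n => ‖v (t (n + 1)) - v (t n)‖ ^ p) fun n hn hnι =>
      absurd ⟨(n - m).toNat, by simp [ι, hm hn]⟩ hnι
  obtain ⟨N, hN⟩ := (F.preimage ι hι.injective.injOn).exists_nat_subset_range
  rw [← hF]
  calc _ ≤ ∑ j ∈ Finset.range N, ‖v (t (ι j + 1)) - v (t (ι j))‖ ^ p :=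
        Finset.sum_le_sum_of_subset_of_nonneg hN fun _ _ _ => by positivity
    _ ≤ VpNormR p v ^ p := by
        simpa [ι, add_assoc] using sum_norm_sub_rpow_le_VpNormR_rpow hp hbd (ht.comp hι) N

theorem tsum_enorm_sub_rpow_le (hp : 0 < p) (hbd : BddAbove (varSumsR p v))
    {t : ℤ → ℝ} (ht : StrictMono t) :
    ∑' n : ℤ, ‖v (t (n + 1)) - v (t n)‖ₑ ^ p ≤ ENNReal.ofReal (VpNormR p v ^ p) := by
  rw [ENNReal.tsum_eq_iSup_sum]
  refine iSup_le fun F => ?_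
  simp only [← ofReal_norm, ENNReal.ofReal_rpow_of_nonneg (norm_nonneg _) hp.le]
  rw [← ENNReal.ofReal_sum_of_nonneg fun _ _ => by positivity]
  exact ENNReal.ofReal_le_ofReal (sum_int_norm_sub_rpow_le_VpNormR_rpow hp hbd ht F)

end Variation

/-- For `1 < p < ∞`, `v ∈ V^p(ℝ)` and `h > 0`,
`‖v(·+h) − v‖_{L^p(ℝ)} ≤ C h^{1/p} ‖v‖_{V^p}` with the universal constant `C = 4^{1/p}`
(in particular the left-hand side is finite). -/
theorem stmt_13 (p : ℝ) (hp : 1 < p) (v : ℝ → ℂ) (h : ℝ) (hh : 0 < h)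
    (hbd : BddAbove (varSumsR p v)) :
    eLpNorm (fun x => v (x + h) - v x) (ENNReal.ofReal p) volume
      ≤ ENNReal.ofReal ((4 : ℝ) ^ p⁻¹ * h ^ p⁻¹ * VpNormR p v) := by
  have hp0 : 0 < p := one_pos.trans hp
  set M := VpNormR p v
  have hM : 0 ≤ M := VpNormR_nonneg hbd
  have hint : ∫⁻ x, ‖v (x + h) - v x‖ₑ ^ p ≤ ENNReal.ofReal (M ^ p) * ENNReal.ofReal h := by
    refine lintegral_le_mul_of_tsum_zsmul_le hh fun y => ?_
    have ht : StrictMono fun n : ℤ => y + n • h := fun _ _ hmn =>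
      (add_lt_add_iff_left y).2 (zsmul_lt_zsmul_left hh hmn)
    simpa only [add_one_zsmul, add_assoc] using tsum_enorm_sub_rpow_le hp0 hbd ht
  rw [eLpNorm_eq_lintegral_rpow_enorm_toReal (by simpa using hp0) ENNReal.ofReal_ne_top,
    ENNReal.toReal_ofReal hp0.le, one_div]
  calc (∫⁻ x, ‖v (x + h) - v x‖ₑ ^ p) ^ p⁻¹
      ≤ (ENNReal.ofReal (M ^ p) * ENNReal.ofReal h) ^ p⁻¹ := by gcongr
    _ = ENNReal.ofReal (h ^ p⁻¹ * M) := by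
        rw [← ENNReal.ofReal_mul (by positivity),
          ENNReal.ofReal_rpow_of_nonneg (by positivity) (by positivity),
          Real.mul_rpow (by positivity) hh.le, Real.rpow_rpow_inv hM hp0.ne', mul_comm]
    _ ≤ ENNReal.ofReal ((4 : ℝ) ^ p⁻¹ * h ^ p⁻¹ * M) := by
        gcongr
        exact le_mul_of_one_le_left (by positivity) (Real.one_le_rpow (by norm_num) (by positivity))
end
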